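/- Let $\tau \in \mathcal{H}$ and $z \in \mathbb{C}$ with $0 < \operatorname{Im} z < \operatorname{Im} \tau$, and let $j \ge 1$, $i \ge 0$ be integers. Then the partial derivative in $\tau$ (at fixed $z$) of $g^i_j$ exists and satisfies $\partial_\tau\, g^i_j(z,\tau) = \frac{j}{2\pi i}\; g^{i+1}_{j+1}(z,\tau)$; in particular, the series defining $g^i_j$ may be differentiated term by term in $\tau$. -/

import Mathlib

open Complex Real Metric

lemma cauchy_est {f : ℂ → ℂ} {y : ℂ} {R M : ℝ} (hR : 0 < R)
    (hf : DifferentiableOn ℂ f (Metric.closedBall y R))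
    (hM : ∀ w ∈ Metric.closedBall y R, ‖f w‖ ≤ M) (k : ℕ) :
    ‖iteratedDeriv k f y‖ ≤ k.factorial * M / R ^ k := by
  set Rn : NNReal := ⟨R, hR.le⟩ with hRn
  have hRc : (Rn : ℝ) = R := rfl
  have hRpos : 0 < Rn := by exact_mod_cast hR
  have hp : HasFPowerSeriesOnBall f (cauchyPowerSeries f y Rn) y Rn := by
    refine DifferentiableOn.hasFPowerSeriesOnBall ?_ hRpos
    rwa [hRc]
  have h1 : iteratedDeriv k f y = k.factorial • (cauchyPowerSeries f y Rn k fun _ => 1) := by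
    rw [iteratedDeriv_eq_iteratedFDeriv]
    exact (hp.factorial_smul (1 : ℂ) k).symm
  have hM0 : 0 ≤ M := le_trans (norm_nonneg _) (hM y (Metric.mem_closedBall_self hR.le))
  have h2 : ‖cauchyPowerSeries f y Rn k fun _ => 1‖ ≤ ‖cauchyPowerSeries f y Rn k‖ := by
    have := (cauchyPowerSeries f y Rn k).le_opNorm fun _ => (1 : ℂ)
    simpa using this
  have hcont : ContinuousOn (fun θ : ℝ => ‖f (circleMap y R θ)‖) (Set.uIcc 0 (2 * π)) := by
    apply ContinuousOn.norm
    apply hf.continuousOn.comp (continuous_circleMap y R).continuousOn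
    intro θ _
    exact Metric.sphere_subset_closedBall (circleMap_mem_sphere y hR.le θ)
  have h3 : (∫ θ : ℝ in (0)..2 * π, ‖f (circleMap y R θ)‖) ≤ 2 * π * M := by
    have := intervalIntegral.integral_mono_on (a := 0) (b := 2 * π) Real.two_pi_pos.le
      (hcont.intervalIntegrable) (intervalIntegrable_const (c := M) (μ := MeasureTheory.volume))
      (fun θ _ => hM _ (Metric.sphere_subset_closedBall (circleMap_mem_sphere y hR.le θ)))
    simpa [mul_comm] using this
  have h4 : ‖cauchyPowerSeries f y Rn k‖ ≤ M * (R⁻¹) ^ k := by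
    have := norm_cauchyPowerSeries_le f y Rn k
    rw [hRc] at this
    refine this.trans ?_
    rw [abs_of_pos hR]
    gcongr
    calc (2 * π)⁻¹ * ∫ θ : ℝ in (0)..2 * π, ‖f (circleMap y R θ)‖
        ≤ (2 * π)⁻¹ * (2 * π * M) := mul_le_mul_of_nonneg_left h3 (by positivity)
      _ = M := by field_simp
  calc ‖iteratedDeriv k f y‖ = k.factorial * ‖cauchyPowerSeries f y Rn k fun _ => 1‖ := by
        rw [h1, nsmul_eq_mul, norm_mul]; simp
    _ ≤ k.factorial * (M * R⁻¹ ^ k) := by gcongr; exact h2.trans h4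
    _ = k.factorial * M / R ^ k := by rw [inv_pow]; ring

lemma re_aux (n : ℤ) (s : ℂ) : (2 * (π : ℂ) * I * (n : ℂ) * s).re = -(2 * π * (n : ℝ) * s.im) := by
  simp [Complex.mul_re, Complex.mul_im]

lemma abs_exp_aux (n : ℤ) (s : ℂ) :
    ‖Complex.exp (2 * (π : ℂ) * I * (n : ℂ) * s)‖ =
      Real.exp (-(2 * π * (n : ℝ) * s.im)) := by
  rw [Complex.norm_exp, re_aux]

lemma ne_zero_aux {n : ℤ} (hn : n ≠ 0) {s : ℂ} (hs : 0 < s.im) :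
    1 - Complex.exp (2 * (π : ℂ) * I * (n : ℂ) * s) ≠ 0 := by
  intro h
  have h1 : Complex.exp (2 * (π : ℂ) * I * (n : ℂ) * s) = 1 := by
    linear_combination -h
  have h2 : Real.exp (-(2 * π * (n : ℝ) * s.im)) = 1 := by
    rw [← abs_exp_aux, h1]; simp
  rw [Real.exp_eq_one_iff] at h2
  have hπ := Real.pi_pos
  have : (n : ℝ) ≠ 0 := Int.cast_ne_zero.mpr hn
  have : 2 * π * (n : ℝ) * s.im ≠ 0 := by positivity
  exact this (by linarith)

lemma analytic_aux {n : ℤ} (hn : n ≠ 0) :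
    AnalyticOnNhd ℂ (fun t : ℂ => (1 - Complex.exp (2 * (π : ℂ) * I * (n : ℂ) * t))⁻¹)
      {s : ℂ | 0 < s.im} := by
  have hopen : IsOpen {s : ℂ | 0 < s.im} := isOpen_lt continuous_const Complex.continuous_im
  apply DifferentiableOn.analyticOnNhd ?_ hopen
  apply DifferentiableOn.inv
  · exact (differentiable_const (1 : ℂ)).differentiableOn.sub
      ((Complex.differentiable_exp.comp (differentiable_id.const_mul _)).differentiableOn)
  · exact fun s hs => ne_zero_aux hn hs

lemma bound_aux {c : ℝ} (hc : 0 < c) {n : ℤ} (hn : n ≠ 0) {w : ℂ} (hw : c ≤ w.im) :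
    ‖(1 - Complex.exp (2 * (π : ℂ) * I * (n : ℂ) * w))⁻¹‖ ≤
      (1 - Real.exp (-(2 * π * c)))⁻¹ *
        (if 0 ≤ n then 1 else Real.exp (-(2 * π * c) * n.natAbs)) := by
  have hπ := Real.pi_pos
  set q := Complex.exp (2 * (π : ℂ) * I * (n : ℂ) * w) with hq
  have hqn : ‖q‖ = Real.exp (-(2 * π * (n : ℝ) * w.im)) := by
    rw [hq, abs_exp_aux]
  have hd1 : Real.exp (-(2 * π * c)) < 1 := Real.exp_lt_one_iff.mpr (by positivity |> neg_neg_iff_pos.mpr)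
  have hd0 : 0 < 1 - Real.exp (-(2 * π * c)) := by linarith
  rcases lt_or_ge 0 n with hpos | hneg
  · -- n ≥ 1
    have hn1 : (1 : ℝ) ≤ (n : ℝ) := by exact_mod_cast hpos
    have hqle : ‖q‖ ≤ Real.exp (-(2 * π * c)) := by
      rw [hqn]
      apply Real.exp_le_exp.mpr
      have h1 : c ≤ (n : ℝ) * w.im := by nlinarith
      nlinarith
    have hlow : 1 - Real.exp (-(2 * π * c)) ≤ ‖1 - q‖ := by
      have := norm_sub_norm_le (1 : ℂ) q
      simp only [norm_one] at this
      linarith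
    rw [if_pos hpos.le, mul_one, norm_inv]
    exact inv_anti₀ hd0 hlow
  · -- n < 0
    have hneg' : n < 0 := lt_of_le_of_ne hneg hn
    set m := (n.natAbs : ℝ) with hmdef
    have hm1 : (1 : ℝ) ≤ m := by
      rw [hmdef]
      have h1 : 1 ≤ n.natAbs := by omega
      exact_mod_cast h1
    have hmn : (n : ℝ) = -m := by
      have h : (n.natAbs : ℤ) = -n := by omega
      have h2 := congrArg (fun x : ℤ => (x : ℝ)) h
      push_cast [Nat.cast_natAbs] at h2
      rw [hmdef]
      push_cast [Nat.cast_natAbs]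
      linarith
    set E := Real.exp (2 * π * c * m) with hE
    have hE1 : 1 < E := by
      apply Real.one_lt_exp_iff.mpr
      positivity
    have hqge : E ≤ ‖q‖ := by
      rw [hqn, hmn]
      apply Real.exp_le_exp.mpr
      have h1 : c * m ≤ w.im * m := mul_le_mul_of_nonneg_right hw (by linarith)
      nlinarith
    have hlow : E - 1 ≤ ‖1 - q‖ := by
      have := norm_sub_norm_le q 1
      rw [norm_sub_rev q 1] at this
      simp only [norm_one] at this
      linarith
    have hkey : (1 - Real.exp (-(2 * π * c))) * E ≤ E - 1 := by
      have h1 : (1 : ℝ) ≤ Real.exp (-(2 * π * c)) * E := by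
        rw [hE, ← Real.exp_add]
        apply Real.one_le_exp
        nlinarith [mul_le_mul_of_nonneg_left hm1 (by positivity : (0:ℝ) ≤ 2 * π * c)]
      nlinarith
    have hrw : ((1 - Real.exp (-(2 * π * c))) * E)⁻¹ =
        (1 - Real.exp (-(2 * π * c)))⁻¹ * Real.exp (-(2 * π * c) * m) := by
      rw [mul_inv]
      congr 1
      rw [hE, ← Real.exp_neg]
      ring_nf
    rw [if_neg (not_le.mpr hneg'), norm_inv]
    calc ‖1 - q‖⁻¹ ≤ (E - 1)⁻¹ := inv_anti₀ (by linarith) hlow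
      _ ≤ ((1 - Real.exp (-(2 * π * c))) * E)⁻¹ := inv_anti₀ (by positivity) hkey
      _ = _ := hrw

lemma zpow_bound {n : ℤ} (hn : n ≠ 0) (i j : ℕ) :
    ‖(n : ℂ) ^ ((j : ℤ) - (i : ℤ) - 1)‖ ≤ (n.natAbs : ℝ) ^ j := by
  have h1 : ‖(n : ℂ)‖ = (n.natAbs : ℝ) := by
    rw [Complex.norm_intCast, Nat.cast_natAbs, Int.cast_abs]
  have h2 : (1 : ℝ) ≤ (n.natAbs : ℝ) := by
    have : 1 ≤ n.natAbs := by omega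
    exact_mod_cast this
  rw [norm_zpow, h1]
  calc (n.natAbs : ℝ) ^ ((j : ℤ) - (i : ℤ) - 1) ≤ (n.natAbs : ℝ) ^ (j : ℤ) :=
        zpow_le_zpow_right₀ h2 (by omega)
    _ = (n.natAbs : ℝ) ^ j := zpow_natCast _ _

lemma exp_combo {zim c : ℝ} (h0 : 0 < zim) (h1 : zim < c) {n : ℤ} (hn : n ≠ 0) :
    Real.exp (-(2 * π * (n : ℝ) * zim)) *
      (if 0 ≤ n then 1 else Real.exp (-(2 * π * c) * n.natAbs)) ≤
      Real.exp (-(2 * π) * min zim (c - zim)) ^ n.natAbs := by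
  have hπ := Real.pi_pos
  have hmin1 : min zim (c - zim) ≤ zim := min_le_left _ _
  have hmin2 : min zim (c - zim) ≤ c - zim := min_le_right _ _
  rw [← Real.exp_nat_mul]
  rcases lt_or_ge 0 n with hpos | hneg
  · rw [if_pos hpos.le, mul_one]
    apply Real.exp_le_exp.mpr
    have hcast : ((n.natAbs : ℝ)) = (n : ℝ) := by
      rw [← Int.cast_natCast (R := ℝ) n.natAbs, Int.natAbs_of_nonneg hpos.le]
    rw [hcast]
    have hn1 : (1 : ℝ) ≤ (n : ℝ) := by exact_mod_cast hpos
    have hp1 : (0 : ℝ) ≤ 2 * π * (n : ℝ) := by positivity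
    nlinarith [mul_le_mul_of_nonneg_left hmin1 hp1]
  · have hneg' : n < 0 := lt_of_le_of_ne hneg hn
    rw [if_neg (not_le.mpr hneg'), ← Real.exp_add]
    apply Real.exp_le_exp.mpr
    have hcast : ((n.natAbs : ℝ)) = -(n : ℝ) := by
      have h0' : (n.natAbs : ℤ) = -n := by omega
      rw [← Int.cast_natCast (R := ℝ) n.natAbs, h0', Int.cast_neg]
    rw [hcast]
    have hn1 : (1 : ℝ) ≤ -(n : ℝ) := by
      have h1' : (1 : ℤ) ≤ -n := by omega
      exact_mod_cast h1'
    have hp1 : (0 : ℝ) ≤ 2 * π * (-(n : ℝ)) := by nlinarith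
    nlinarith [mul_le_mul_of_nonneg_left hmin2 hp1]

lemma summable_majorant (C : ℝ) (j : ℕ) {ρ : ℝ} (h0 : 0 ≤ ρ) (h1 : ρ < 1) :
    Summable (fun n : ℤ => C * ((n.natAbs : ℝ) ^ j * ρ ^ n.natAbs)) := by
  have hρn : ‖ρ‖ < 1 := by rwa [Real.norm_eq_abs, _root_.abs_of_nonneg h0]
  have hbase : Summable (fun k : ℕ => C * ((k : ℝ) ^ j * ρ ^ k)) :=
    (summable_pow_mul_geometric_of_norm_lt_one j hρn).mul_left C
  apply Summable.of_nat_of_neg_add_one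
  · simpa using hbase
  · have h2 := (summable_nat_add_iff 1).mpr hbase
    have h3 : ∀ k : ℕ, (-1 + -(k : ℤ)).natAbs = k + 1 := fun k => by omega
    simpa [h3] using h2

lemma term_bound {c r : ℝ} (hc0 : 0 < c) (hr : 0 < r) {n : ℤ} (hn : n ≠ 0) {y : ℂ}
    (hy : ∀ w ∈ Metric.closedBall y r, c ≤ w.im) (k : ℕ) :
    ‖iteratedDeriv k (fun s : ℂ => (1 - Complex.exp (2 * (π : ℂ) * I * (n : ℂ) * s))⁻¹) y‖ ≤
      k.factorial * ((1 - Real.exp (-(2 * π * c)))⁻¹ *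
        (if 0 ≤ n then 1 else Real.exp (-(2 * π * c) * n.natAbs))) / r ^ k := by
  apply cauchy_est hr
  · apply (analytic_aux hn).differentiableOn.mono
    intro w hw
    exact lt_of_lt_of_le hc0 (hy w hw)
  · intro w hw
    exact bound_aux hc0 hn (hy w hw)

/-- `g i j z τ = g^i_j(z,τ) = (2πi)^j/(j-1)! ∑_{n≠0} n^{j-i-1} e^{2πinz} ∂_τ^i (1-e^{2πinτ})⁻¹`. -/
noncomputable def g (i j : ℕ) (z τ : ℂ) : ℂ :=
  (2 * (π : ℂ) * I) ^ j / ((j - 1).factorial : ℂ) *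
    ∑' n : ℤ, if n = 0 then (0 : ℂ) else
      (n : ℂ) ^ ((j : ℤ) - (i : ℤ) - 1) * Complex.exp (2 * (π : ℂ) * I * (n : ℂ) * z) *
        iteratedDeriv i (fun t : ℂ => (1 - Complex.exp (2 * (π : ℂ) * I * (n : ℂ) * t))⁻¹) τ

/-- For `0 < Im z < Im τ`, `j ≥ 1` and `i ≥ 0`, the partial derivative
in `τ` (at fixed `z`) of `g^i_j` exists and `∂_τ g^i_j(z,τ) = (j/(2πi))·g^{i+1}_{j+1}(z,τ)`. -/
theorem stmt15 (τ z : ℂ) (h1 : 0 < z.im) (h2 : z.im < τ.im) (i j : ℕ) (hj : 1 ≤ j) :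
    HasDerivAt (fun t : ℂ => g i j z t) (((j : ℂ) / (2 * (π : ℂ) * I)) * g (i + 1) (j + 1) z τ)
      τ := by
  have hπ := Real.pi_pos
  set c : ℝ := (z.im + τ.im) / 2 with hcdef
  have hc1 : z.im < c := by rw [hcdef]; linarith
  have hc2 : c < τ.im := by rw [hcdef]; linarith
  have hc0 : 0 < c := by linarith
  set r : ℝ := (τ.im - c) / 2 with hrdef
  have hr : 0 < r := by rw [hrdef]; linarith
  have hsub : ∀ y ∈ Metric.ball τ r, ∀ w ∈ Metric.closedBall y r, c ≤ w.im := by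
    intro y hy w hw
    rw [Metric.mem_ball] at hy
    rw [Metric.mem_closedBall] at hw
    have h3 : |(w - τ).im| ≤ ‖w - τ‖ := Complex.abs_im_le_norm _
    rw [Complex.sub_im] at h3
    have h4 : ‖w - τ‖ = dist w τ := (Complex.dist_eq w τ).symm
    have h5 : dist w τ ≤ dist w y + dist y τ := dist_triangle w y τ
    have h6 : |w.im - τ.im| ≤ 2 * r := by
      rw [h4] at h3
      linarith
    have h7 := (abs_le.mp h6).1
    rw [hrdef] at h7
    linarith
  set K : ℝ := (1 - Real.exp (-(2 * π * c)))⁻¹ with hKdef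
  have hd1 : Real.exp (-(2 * π * c)) < 1 := Real.exp_lt_one_iff.mpr (by nlinarith)
  have hK0 : 0 ≤ K := by rw [hKdef]; apply inv_nonneg.mpr; linarith
  set ρ : ℝ := Real.exp (-(2 * π) * min z.im (c - z.im)) with hρdef
  have hρ0 : 0 ≤ ρ := (Real.exp_pos _).le
  have hρ1 : ρ < 1 := by
    rw [hρdef]
    apply Real.exp_lt_one_iff.mpr
    have : 0 < min z.im (c - z.im) := lt_min h1 (by linarith)
    nlinarith
  have key : ∀ (k : ℕ) (n : ℤ), n ≠ 0 → ∀ y : ℂ, (∀ w ∈ Metric.closedBall y r, c ≤ w.im) →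
      ‖(n : ℂ) ^ ((j : ℤ) - (i : ℤ) - 1) * Complex.exp (2 * (π : ℂ) * I * (n : ℂ) * z) *
        iteratedDeriv k (fun s : ℂ => (1 - Complex.exp (2 * (π : ℂ) * I * (n : ℂ) * s))⁻¹) y‖ ≤
      (k.factorial * K / r ^ k) * ((n.natAbs : ℝ) ^ j * ρ ^ n.natAbs) := by
    intro k n hn y hy
    rw [norm_mul, norm_mul]
    have b1 := zpow_bound hn i j
    have b2 : ‖Complex.exp (2 * (π : ℂ) * I * (n : ℂ) * z)‖ =
        Real.exp (-(2 * π * (n : ℝ) * z.im)) := by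
      rw [abs_exp_aux]
    have b3 := term_bound hc0 hr hn hy k
    rw [b2]
    have hcombo := exp_combo h1 hc1 hn
    calc ‖(n : ℂ) ^ ((j : ℤ) - (i : ℤ) - 1)‖ * Real.exp (-(2 * π * (n : ℝ) * z.im)) *
          ‖iteratedDeriv k (fun s : ℂ => (1 - Complex.exp (2 * (π : ℂ) * I * (n : ℂ) * s))⁻¹) y‖
        ≤ (n.natAbs : ℝ) ^ j * Real.exp (-(2 * π * (n : ℝ) * z.im)) *
          (k.factorial * (K * (if 0 ≤ n then 1 else Real.exp (-(2 * π * c) * n.natAbs))) / r ^ k) := by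
          gcongr
      _ = (k.factorial * K / r ^ k) * ((n.natAbs : ℝ) ^ j *
            (Real.exp (-(2 * π * (n : ℝ) * z.im)) *
              (if 0 ≤ n then 1 else Real.exp (-(2 * π * c) * n.natAbs)))) := by ring
      _ ≤ (k.factorial * K / r ^ k) * ((n.natAbs : ℝ) ^ j * ρ ^ n.natAbs) := by
          have hnn : (0:ℝ) ≤ (k.factorial : ℝ) * K / r ^ k := by positivity
          have hnn2 : (0:ℝ) ≤ ((n.natAbs : ℝ)) ^ j := by positivity
          exact mul_le_mul_of_nonneg_left (mul_le_mul_of_nonneg_left hcombo hnn2) hnn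
  have hmain : HasDerivAt (fun t : ℂ => ∑' n : ℤ, (if n = 0 then (0 : ℂ) else
        (n : ℂ) ^ ((j : ℤ) - (i : ℤ) - 1) * Complex.exp (2 * (π : ℂ) * I * (n : ℂ) * z) *
        iteratedDeriv i (fun s : ℂ => (1 - Complex.exp (2 * (π : ℂ) * I * (n : ℂ) * s))⁻¹) t))
      (∑' n : ℤ, (if n = 0 then (0 : ℂ) else
        (n : ℂ) ^ ((j : ℤ) - (i : ℤ) - 1) * Complex.exp (2 * (π : ℂ) * I * (n : ℂ) * z) *
        iteratedDeriv (i + 1)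
          (fun s : ℂ => (1 - Complex.exp (2 * (π : ℂ) * I * (n : ℂ) * s))⁻¹) τ)) τ := by
    refine hasDerivAt_tsum_of_isPreconnected
      (u := fun n : ℤ => ((i + 1).factorial * K / r ^ (i + 1)) * ((n.natAbs : ℝ) ^ j * ρ ^ n.natAbs))
      (g := fun (n : ℤ) (t : ℂ) => if n = 0 then (0 : ℂ) else
        (n : ℂ) ^ ((j : ℤ) - (i : ℤ) - 1) * Complex.exp (2 * (π : ℂ) * I * (n : ℂ) * z) *
        iteratedDeriv i (fun s : ℂ => (1 - Complex.exp (2 * (π : ℂ) * I * (n : ℂ) * s))⁻¹) t)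
      (g' := fun (n : ℤ) (t : ℂ) => if n = 0 then (0 : ℂ) else
        (n : ℂ) ^ ((j : ℤ) - (i : ℤ) - 1) * Complex.exp (2 * (π : ℂ) * I * (n : ℂ) * z) *
        iteratedDeriv (i + 1)
          (fun s : ℂ => (1 - Complex.exp (2 * (π : ℂ) * I * (n : ℂ) * s))⁻¹) t)
      (summable_majorant _ _ hρ0 hρ1) Metric.isOpen_ball (convex_ball τ r).isPreconnected
      ?_ ?_ (Metric.mem_ball_self hr) ?_ (Metric.mem_ball_self hr)
    · intro n y hy
      rcases eq_or_ne n 0 with rfl | hn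
      · simpa using hasDerivAt_const y (0 : ℂ)
      · simp only [if_neg hn]
        have hyU : (0 : ℝ) < y.im :=
          lt_of_lt_of_le hc0 (hsub y hy y (Metric.mem_closedBall_self hr.le))
        have ha := (analytic_aux hn).iterated_deriv i
        have hd : HasDerivAt
            (iteratedDeriv i (fun s : ℂ => (1 - Complex.exp (2 * (π : ℂ) * I * (n : ℂ) * s))⁻¹))
            (iteratedDeriv (i + 1)
              (fun s : ℂ => (1 - Complex.exp (2 * (π : ℂ) * I * (n : ℂ) * s))⁻¹) y) y := by
          rw [iteratedDeriv_succ]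
          simp only [iteratedDeriv_eq_iterate]
          exact ((ha y hyU).differentiableAt).hasDerivAt
        exact hd.const_mul _
    · intro n y hy
      rcases eq_or_ne n 0 with rfl | hn
      · simp only [↓reduceIte, norm_zero]
        positivity
      · simp only [if_neg hn]
        exact key (i + 1) n hn y (hsub y hy)
    · apply Summable.of_norm_bounded
        (summable_majorant ((i.factorial : ℝ) * K / r ^ i) j hρ0 hρ1)
      intro n
      rcases eq_or_ne n 0 with rfl | hn
      · simp only [↓reduceIte, norm_zero]
        positivity
      · simp only [if_neg hn]
        exact key i n hn τ (hsub τ (Metric.mem_ball_self hr))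
  have hconst := hmain.const_mul ((2 * (π : ℂ) * I) ^ j / ((j - 1).factorial : ℂ))
  have heq : (2 * (π : ℂ) * I) ^ j / ((j - 1).factorial : ℂ) *
      (∑' n : ℤ, (if n = 0 then (0 : ℂ) else
        (n : ℂ) ^ ((j : ℤ) - (i : ℤ) - 1) * Complex.exp (2 * (π : ℂ) * I * (n : ℂ) * z) *
        iteratedDeriv (i + 1)
          (fun s : ℂ => (1 - Complex.exp (2 * (π : ℂ) * I * (n : ℂ) * s))⁻¹) τ)) =
      ((j : ℂ) / (2 * (π : ℂ) * I)) * g (i + 1) (j + 1) z τ := by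
    rw [g]
    have hexp : ((j + 1 : ℕ) : ℤ) - ((i + 1 : ℕ) : ℤ) - 1 = (j : ℤ) - (i : ℤ) - 1 := by
      push_cast; ring
    rw [hexp]
    simp only [Nat.add_sub_cancel]
    obtain ⟨j', rfl⟩ : ∃ j', j = j' + 1 := ⟨j - 1, by omega⟩
    have hfac' : ((j' + 1).factorial : ℂ) = ((j' : ℂ) + 1) * (j'.factorial : ℂ) := by
      push_cast [Nat.factorial_succ]; ring
    simp only [Nat.add_sub_cancel]
    rw [hfac']
    have f1 : (j'.factorial : ℂ) ≠ 0 := Nat.cast_ne_zero.mpr (Nat.factorial_ne_zero _)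
    have f2 : ((j' : ℂ) + 1) ≠ 0 := by
      have : ((j' + 1 : ℕ) : ℂ) ≠ 0 := Nat.cast_ne_zero.mpr (by omega)
      push_cast at this
      exact this
    have f3 : (2 * (π : ℂ) * I) ≠ 0 := Complex.two_pi_I_ne_zero
    set S := (∑' n : ℤ, (if n = 0 then (0 : ℂ) else
          (n : ℂ) ^ (((j' + 1 : ℕ) : ℤ) - (i : ℤ) - 1) * Complex.exp (2 * (π : ℂ) * I * (n : ℂ) * z) *
          iteratedDeriv (i + 1)
            (fun s : ℂ => (1 - Complex.exp (2 * (π : ℂ) * I * (n : ℂ) * s))⁻¹) τ)) with hS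
    field_simp
    push_cast
    ring
  rw [← heq]
  simpa only [g] using hconst
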